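/- arXiv:2010.12987 — 2 statements merged into one kernel-verified Lean document; each statement's English description precedes it below -/
import Mathlib

section
/- Fix a positive integer n and suppose the sequence a_k = (-1)^{T^k(n)} is eventually periodic. Then the trajectory (T^k(n))_{k≥0} is bounded, i.e., it eventually enters a cycle of T. -/
/-!
Two numbers whose trajectories have the same parity sequence coincide: each step halves the
difference of the two iterates, after multiplying it by 3 on odd steps, so `2 ^ k` divides
`3 ^ s * (y - x)` for every `k`, `s` being the number of odd steps. If the parity sequence of `n`
is periodic from step `K` on with period `l`, this applies to `T^[K] n` and `T^[l] (T^[K] n)`,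
which therefore lie on a cycle.
-/

def T (n : ℕ) : ℕ := if n % 2 = 0 then n / 2 else (3 * n + 1) / 2

lemma mod_two_eq_of_neg_one_pow_eq {R : Type*} [Ring R] (hR : (-1 : R) ≠ 1) {a b : ℕ}
    (h : (-1 : R) ^ a = (-1) ^ b) : a % 2 = b % 2 := by
  rw [neg_one_pow_eq_pow_mod_two, neg_one_pow_eq_pow_mod_two (n := b)] at h
  rcases Nat.mod_two_eq_zero_or_one a with ha | ha <;>
    rcases Nat.mod_two_eq_zero_or_one b with hb | hb <;> simp_all [eq_comm]

lemma two_mul_T (x : ℕ) : 2 * (T x : ℤ) = 3 ^ (x % 2) * x + (x % 2 : ℕ) := by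
  unfold T
  rcases Nat.mod_two_eq_zero_or_one x with hx | hx <;>
    simp only [hx, one_ne_zero, if_true, if_false] <;> omega

lemma two_mul_T_sub_T {x y : ℕ} (hxy : x % 2 = y % 2) :
    2 * ((T y : ℤ) - T x) = 3 ^ (x % 2) * ((y : ℤ) - x) := by
  have hy := two_mul_T y
  rw [← hxy] at hy
  linear_combination hy - two_mul_T x

lemma two_pow_mul_iterate_T_sub {x y : ℕ} (hxy : ∀ k, T^[k] x % 2 = T^[k] y % 2) (k : ℕ) :
    2 ^ k * ((T^[k] y : ℤ) - T^[k] x)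
      = 3 ^ (∑ i ∈ Finset.range k, T^[i] x % 2) * ((y : ℤ) - x) := by
  induction k with
  | zero => simp
  | succ k ih =>
    rw [Function.iterate_succ_apply', Function.iterate_succ_apply', Finset.sum_range_succ,
      pow_succ, pow_add, mul_assoc, two_mul_T_sub_T (hxy k), mul_right_comm _ (3 ^ _), ← ih]
    ring

lemma eq_of_iterate_T_mod_two_eq {x y : ℕ} (hxy : ∀ k, T^[k] x % 2 = T^[k] y % 2) : x = y := by
  have hdvd (k : ℕ) : (2 : ℤ) ^ k ∣ (y : ℤ) - x :=
    (IsCoprime.pow (by norm_num : IsCoprime (2 : ℤ) 3)).dvd_of_dvd_mul_left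
      ⟨_, (two_pow_mul_iterate_T_sub hxy k).symm⟩
  set d : ℤ := (y : ℤ) - x
  have hd : d = 0 := by
    refine Int.eq_zero_of_dvd_of_natAbs_lt_natAbs (hdvd d.natAbs) ?_
    rw [Int.natAbs_pow]
    exact Nat.lt_two_pow_self
  omega

theorem stmt_15_general (n : ℕ)
    (h : ∃ K l : ℕ, 1 ≤ l ∧ ∀ k, K ≤ k →
      ((-1 : ℤ) ^ T^[k + l] n = (-1 : ℤ) ^ T^[k] n)) :
    ∃ j m : ℕ, 1 ≤ m ∧ T^[m] (T^[j] n) = T^[j] n := by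
  obtain ⟨K, l, hl, hper⟩ := h
  refine ⟨K, l, hl, (eq_of_iterate_T_mod_two_eq fun k => ?_).symm⟩
  rw [← Function.iterate_add_apply, ← Function.iterate_add_apply, ← Function.iterate_add_apply,
    show k + l + K = k + K + l by omega]
  exact (mod_two_eq_of_neg_one_pow_eq (by norm_num) (hper (k + K) (by omega))).symm

theorem stmt_15 (n : ℕ) (hn : 1 ≤ n)
    (h : ∃ K l : ℕ, 1 ≤ l ∧ ∀ k, K ≤ k →
      ((-1 : ℤ) ^ T^[k + l] n = (-1 : ℤ) ^ T^[k] n)) :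
    ∃ j m : ℕ, 1 ≤ m ∧ T^[m] (T^[j] n) = T^[j] n :=
  stmt_15_general n h
end

section
/- For every d with 1/2 < d < 1, the proportion of n ∈ {1, ..., 2^k} with S_k(n) ≤ d·k tends to 1 as k → ∞, where S_k(n) = #{0 ≤ i ≤ k-1 : T^i(n) is odd}. -/
def S (k n : ℕ) : ℕ := ((Finset.range k).filter (fun i => T^[i] n % 2 = 1)).card

open Finset Filter Topology

lemma two_mul_T_s18 (n : ℕ) : 2 * T n = if n % 2 = 0 then n else 3 * n + 1 := by
  unfold T; split_ifs <;> omega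

lemma modEq_two_pow_succ_of_T_modEq {k n m : ℕ} (hpar : n % 2 = m % 2)
    (h : T n ≡ T m [MOD 2 ^ k]) : n ≡ m [MOD 2 ^ (k + 1)] := by
  have h2 : 2 * T n ≡ 2 * T m [MOD 2 ^ (k + 1)] := by
    rw [pow_succ']; exact h.mul_left' 2
  rw [two_mul_T_s18, two_mul_T_s18, ← hpar] at h2
  split_ifs at h2
  · exact h2
  · exact (Nat.ModEq.add_right_cancel' 1 h2).cancel_left_of_coprime
      (Nat.Coprime.pow_left _ (by norm_num))

lemma modEq_two_pow_of_parity_eq (k : ℕ) :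
    ∀ n m, (∀ i < k, T^[i] n % 2 = T^[i] m % 2) → n ≡ m [MOD 2 ^ k] := by
  induction k with
  | zero => intro n m _; simp [Nat.modEq_one]
  | succ k ih =>
    intro n m h
    refine modEq_two_pow_succ_of_T_modEq (h 0 k.succ_pos) (ih _ _ fun i hi => ?_)
    simpa only [Function.iterate_succ_apply] using h (i + 1) (by omega)

def oddSteps (k n : ℕ) : Finset ℕ := (range k).filter (fun i => T^[i] n % 2 = 1)

lemma S_eq_card_oddSteps (k n : ℕ) : S k n = #(oddSteps k n) := rfl

lemma oddSteps_injOn (k : ℕ) : Set.InjOn (oddSteps k) (range (2 ^ k)) := by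
  intro n hn m hm h
  have hpar : ∀ i < k, T^[i] n % 2 = T^[i] m % 2 := by
    intro i hi
    have := congrArg (i ∈ ·) h
    simp only [oddSteps, mem_filter, mem_range, hi, true_and, eq_iff_iff] at this
    omega
  have := modEq_two_pow_of_parity_eq k n m hpar
  rwa [Nat.ModEq, Nat.mod_eq_of_lt (mem_range.1 hn), Nat.mod_eq_of_lt (mem_range.1 hm)] at this

lemma image_oddSteps_range (k : ℕ) : (range (2 ^ k)).image (oddSteps k) = (range k).powerset := by
  refine eq_of_subset_of_card_le (fun s hs => ?_) ?_
  · obtain ⟨n, -, rfl⟩ := mem_image.1 hs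
    exact mem_powerset.2 (filter_subset _ _)
  · rw [card_image_of_injOn (oddSteps_injOn k), card_powerset, card_range, card_range]

lemma card_filter_range_S (k : ℕ) (p : ℕ → Prop) [DecidablePred p] :
    #{n ∈ range (2 ^ k) | p (S k n)} = #{t ∈ (range k).powerset | p t.card} := by
  rw [← image_oddSteps_range, filter_image,
    card_image_of_injOn ((oddSteps_injOn k).mono (filter_subset _ _))]
  rfl

lemma oddSteps_zero (k : ℕ) : oddSteps k 0 = ∅ := by
  have : ∀ i, T^[i] 0 = 0 := fun i => Function.iterate_fixed (by simp [T]) i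
  simp [oddSteps, this]

lemma T_iterate_two_pow_add (i j : ℕ) : T^[i] (2 ^ (i + j)) = 2 ^ j := by
  induction i generalizing j with
  | zero => simp
  | succ i ih =>
    have hT : T (2 ^ (i + 1 + j)) = 2 ^ (i + j) := by
      rw [show i + 1 + j = (i + j) + 1 by omega, pow_succ]; simp [T]
    rw [Function.iterate_succ_apply, hT, ih]

lemma oddSteps_two_pow (k : ℕ) : oddSteps k (2 ^ k) = ∅ := by
  refine filter_eq_empty_iff.2 fun i hi => ?_
  obtain ⟨j, rfl⟩ := Nat.exists_eq_add_of_lt (mem_range.1 hi)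
  rw [show i + j + 1 = i + (j + 1) by omega, T_iterate_two_pow_add, pow_succ]
  omega

lemma card_filter_Icc_one_eq_card_filter_range (N : ℕ) (p : ℕ → Prop) [DecidablePred p]
    (h : p 0 ↔ p N) : #{n ∈ Icc 1 N | p n} = #{n ∈ range N | p n} := by
  -- peel the count over `range (N + 1)` at either end
  have hsplit := sum_range_succ' (fun n => if p n then 1 else 0) N
  rw [sum_range_succ] at hsplit
  simp only [h] at hsplit
  rw [card_filter, card_filter, ← Ico_add_one_right_eq_Icc, sum_Ico_eq_sum_range,
    Nat.add_sub_cancel]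
  simp only [add_comm 1]
  omega

section CoinTossing

variable {α : Type*} [DecidableEq α]

lemma sum_powerset_sq_two_mul_card_sub (s : Finset α) :
    ∑ t ∈ s.powerset, (2 * (#t : ℝ) - #s) ^ 2 = (#s : ℝ) * 2 ^ #s := by
  induction s using Finset.induction_on with
  | empty => simp
  | insert a s ha ih =>
    rw [sum_powerset_insert ha, card_insert_of_notMem ha, ← sum_add_distrib]
    calc ∑ t ∈ s.powerset,
          ((2 * (#t : ℝ) - ↑(#s + 1)) ^ 2 + (2 * ↑(#(insert a t)) - ↑(#s + 1)) ^ 2)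
        = ∑ t ∈ s.powerset, (2 * (2 * (#t : ℝ) - #s) ^ 2 + 2) := by
          refine sum_congr rfl fun t ht => ?_
          rw [card_insert_of_notMem fun hat => ha (mem_powerset.1 ht hat)]
          push_cast; ring
      _ = _ := by
          rw [sum_add_distrib, ← mul_sum, ih, sum_const, card_powerset, nsmul_eq_mul]
          push_cast; ring

lemma card_filter_card_gt_mul_sq_le (s : Finset α) (d : ℝ) (hd : 1 / 2 < d) :
    #{t ∈ s.powerset | d * #s < #t} * ((2 * d - 1) * #s) ^ 2 ≤ (#s : ℝ) * 2 ^ #s := by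
  rw [← sum_powerset_sq_two_mul_card_sub, ← nsmul_eq_mul]
  refine (card_nsmul_le_sum _ _ _ fun t ht => ?_).trans
    (sum_le_sum_of_subset_of_nonneg (filter_subset _ _) fun _ _ _ => sq_nonneg _)
  have ht := (mem_filter.1 ht).2
  exact pow_le_pow_left₀ (by nlinarith [(#s).cast_nonneg (α := ℝ)]) (by linarith) 2

lemma one_sub_div_le_card_filter_card_le_div (s : Finset α) (hs : s.Nonempty) (d : ℝ)
    (hd : 1 / 2 < d) :
    1 - ((2 * d - 1) ^ 2)⁻¹ / #s ≤
      (#{t ∈ s.powerset | (#t : ℝ) ≤ d * #s} : ℝ) / 2 ^ #s := by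
  have htail := card_filter_card_gt_mul_sq_le s d hd
  have hs : (0 : ℝ) < #s := by exact_mod_cast hs.card_pos
  have hd : 0 < 2 * d - 1 := by linarith
  have hsplit :=
    card_filter_add_card_filter_not (s := s.powerset) (fun t => (#t : ℝ) ≤ d * #s)
  simp only [card_powerset, not_le] at hsplit
  generalize #{t ∈ s.powerset | (#t : ℝ) ≤ d * #s} = A at hsplit ⊢
  generalize #{t ∈ s.powerset | d * #s < #t} = B at htail hsplit
  have hsum : (A : ℝ) + B = 2 ^ #s := by exact_mod_cast hsplit
  have hB : (B : ℝ) ≤ 2 ^ #s * (((2 * d - 1) ^ 2)⁻¹ / #s) := by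
    rw [show (2 : ℝ) ^ #s * (((2 * d - 1) ^ 2)⁻¹ / #s) = 2 ^ #s / ((2 * d - 1) ^ 2 * #s) by
      field_simp, le_div_iff₀ (by positivity)]
    nlinarith
  rw [le_div_iff₀ (by positivity), ← hsum] at *
  linarith

theorem tendsto_card_filter_powerset_range_card_le_div (d : ℝ) (hd : 1 / 2 < d) :
    Tendsto (fun k : ℕ => (#{t ∈ (range k).powerset | (#t : ℝ) ≤ d * k} : ℝ) / 2 ^ k)
      atTop (𝓝 1) := by
  have hlower : ∀ᶠ k : ℕ in atTop, 1 - ((2 * d - 1) ^ 2)⁻¹ / k ≤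
      (#{t ∈ (range k).powerset | (#t : ℝ) ≤ d * k} : ℝ) / 2 ^ k := by
    filter_upwards [eventually_ge_atTop 1] with k hk
    simpa using
      one_sub_div_le_card_filter_card_le_div (range k) (nonempty_range_iff.2 (by omega)) d hd
  have hupper : ∀ k : ℕ,
      (#{t ∈ (range k).powerset | (#t : ℝ) ≤ d * k} : ℝ) / 2 ^ k ≤ 1 := by
    refine fun k => div_le_one_of_le₀ ?_ (by positivity)
    exact_mod_cast (card_filter_le _ _).trans (by simp)
  refine tendsto_of_tendsto_of_tendsto_of_le_of_le' ?_ tendsto_const_nhds hlower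
    (Eventually.of_forall hupper)
  simpa using (tendsto_const_div_atTop_nhds_zero_nat ((2 * d - 1) ^ 2)⁻¹).const_sub (1 : ℝ)

end CoinTossing

theorem stmt_18_general (d : ℝ) (hd1 : 1 / 2 < d) :
    Filter.Tendsto
      (fun k : ℕ =>
        (((Finset.Icc 1 (2 ^ k)).filter (fun n => (S k n : ℝ) ≤ d * k)).card : ℝ) / 2 ^ k)
      Filter.atTop (nhds 1) := by
  refine (tendsto_card_filter_powerset_range_card_le_div d hd1).congr fun k => ?_
  have hends : S k 0 = S k (2 ^ k) := by
    rw [S_eq_card_oddSteps, S_eq_card_oddSteps, oddSteps_zero, oddSteps_two_pow]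
  rw [card_filter_Icc_one_eq_card_filter_range _ _ (by rw [hends]),
    card_filter_range_S k (fun m => (m : ℝ) ≤ d * k)]

theorem stmt_18 (d : ℝ) (hd1 : 1 / 2 < d) (hd2 : d < 1) :
    Filter.Tendsto
      (fun k : ℕ =>
        (((Finset.Icc 1 (2 ^ k)).filter (fun n => (S k n : ℝ) ≤ d * k)).card : ℝ) / 2 ^ k)
      Filter.atTop (nhds 1) :=
  stmt_18_general d hd1
end
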